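/- arXiv:2404.13367 — 2 statements merged into one kernel-verified Lean document; each statement's English description precedes it below -/
import Mathlib

section
/- Let F be a Minkowski norm on a finite-dimensional real vector space 𝔪 with inner product Q, and suppose F is invariant under the one-parameter group exp(t·ad(w))|_𝔪 for some linear derivation-like operator ad(w) skew-symmetric with respect to Q. Then the metric operator satisfies [A_y, ad(w)](y) = 0 for all y ≠ 0, i.e. A_y(ad(w)y) = ad(w)(A_y y). -/
open RealInnerProductSpace

/-- The fundamental tensor of `F`: `g_y(u,v) = ½ ∂²/∂s∂t [F(y+su+tv)²]|_{s=t=0}`. -/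
noncomputable def gtensor {V : Type*} [NormedAddCommGroup V] [InnerProductSpace ℝ V]
    (F : V → ℝ) (y u v : V) : ℝ :=
  (1 / 2) * deriv (fun s : ℝ => deriv (fun t : ℝ => (F (y + s • u + t • v)) ^ 2) 0) 0

/-- `F` is a Minkowski norm: smooth away from `0`, positive away from `0`, positively
1-homogeneous, with positive definite fundamental tensor. -/
def IsMinkowskiNorm {V : Type*} [NormedAddCommGroup V] [InnerProductSpace ℝ V]
    (F : V → ℝ) : Prop :=
  ContDiffOn ℝ (⊤ : ℕ∞) F {(0 : V)}ᶜ ∧ (∀ y : V, y ≠ 0 → 0 < F y) ∧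
    (∀ t : ℝ, 0 ≤ t → ∀ y : V, F (t • y) = t * F y) ∧
    (∀ y : V, y ≠ 0 → ∀ u : V, u ≠ 0 → 0 < gtensor F y u u)

section Aux

variable {V : Type*} [NormedAddCommGroup V] [InnerProductSpace ℝ V]

/-- Differentiability of `G = F²` away from zero. -/
lemma aux_diffAt {F : V → ℝ} (hF : ContDiffOn ℝ (⊤ : ℕ∞) F {(0 : V)}ᶜ) {x : V} (hx : x ≠ 0) :
    ContDiffAt ℝ (⊤ : ℕ∞) (fun z => (F z) ^ 2) x := by
  have : ContDiffOn ℝ (⊤ : ℕ∞) (fun z => (F z) ^ 2) {(0 : V)}ᶜ := hF.pow 2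
  exact this.contDiffAt (isOpen_compl_singleton.mem_nhds hx)

/-- The second-derivative expression for `gtensor`. -/
lemma gtensor_eq_sndDeriv {F : V → ℝ} (hF : ContDiffOn ℝ (⊤ : ℕ∞) F {(0 : V)}ᶜ)
    {y : V} (hy : y ≠ 0) (u v : V) :
    gtensor F y u v
      = (1 / 2) * fderiv ℝ (fderiv ℝ (fun z => (F z) ^ 2)) y u v := by
  set G : V → ℝ := fun z => (F z) ^ 2 with hG
  have hdiff : ∀ x : V, x ≠ 0 → DifferentiableAt ℝ G x := fun x hx =>
    (aux_diffAt hF hx).differentiableAt (by simp)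
  have hfd : DifferentiableAt ℝ (fderiv ℝ G) y := by
    have h2 : ContDiffAt ℝ 1 (fderiv ℝ G) y :=
      (aux_diffAt hF hy).fderiv_right (WithTop.coe_le_coe.mpr le_top)
    exact h2.differentiableAt one_ne_zero
  -- inner derivative
  have hinner : ∀ᶠ s : ℝ in nhds 0,
      deriv (fun t : ℝ => G (y + s • u + t • v)) 0 = fderiv ℝ G (y + s • u) v := by
    have hcont : ContinuousAt (fun s : ℝ => y + s • u) 0 := by fun_prop
    have hne : ∀ᶠ s : ℝ in nhds 0, y + s • u ≠ 0 := by
      have : (fun s : ℝ => y + s • u) 0 = y := by simp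
      have := hcont.eventually_ne (by simpa [this] using hy)
      simpa using this
    filter_upwards [hne] with s hs
    have hcurve : HasDerivAt (fun t : ℝ => y + s • u + t • v) v 0 := by
      simpa using ((hasDerivAt_id (0 : ℝ)).smul_const v).const_add (y + s • u)
    have hGd : HasFDerivAt G (fderiv ℝ G (y + s • u)) (y + s • u) :=
      (hdiff _ hs).hasFDerivAt
    have hGd' : HasFDerivAt G (fderiv ℝ G (y + s • u)) (y + s • u + (0 : ℝ) • v) := by
      simpa using hGd
    have : HasDerivAt (fun t : ℝ => G (y + s • u + t • v)) (fderiv ℝ G (y + s • u) v) 0 := by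
      simpa [Function.comp_def] using hGd'.comp_hasDerivAt (x := (0 : ℝ)) hcurve
    exact this.deriv
  -- outer derivative
  have houter : HasDerivAt (fun s : ℝ => fderiv ℝ G (y + s • u) v)
      (fderiv ℝ (fderiv ℝ G) y u v) 0 := by
    have hcurve : HasDerivAt (fun s : ℝ => y + s • u) u 0 := by
      simpa using ((hasDerivAt_id (0 : ℝ)).smul_const u).const_add y
    have h1 : HasDerivAt (fun s : ℝ => fderiv ℝ G (y + s • u))
        (fderiv ℝ (fderiv ℝ G) y u) 0 := by
      have hfd' : HasFDerivAt (fderiv ℝ G) (fderiv ℝ (fderiv ℝ G) y) (y + (0 : ℝ) • u) := by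
        simpa using hfd.hasFDerivAt
      simpa [Function.comp_def] using hfd'.comp_hasDerivAt (x := (0 : ℝ)) hcurve
    have happ := ((ContinuousLinearMap.apply ℝ ℝ v).hasFDerivAt).comp_hasDerivAt
      (x := (0 : ℝ)) h1
    simpa [Function.comp_def] using happ
  have : deriv (fun s : ℝ => deriv (fun t : ℝ => G (y + s • u + t • v)) 0) 0
      = fderiv ℝ (fderiv ℝ G) y u v := by
    rw [Filter.EventuallyEq.deriv_eq hinner]
    exact houter.deriv
  simpa [gtensor, hG] using congrArg (fun r => (1 / 2 : ℝ) * r) this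

end Aux

/-- if the Minkowski norm `F` is invariant under the one-parameter group
`exp(tW)` of a `Q`-skew-symmetric operator `W`, then the metric operator satisfies
`[A_y, W](y) = 0`, i.e. `A_y(Wy) = W(A_y y)` for all `y ≠ 0`. -/
theorem metric_operator_commutes_with_skew
    {V : Type*} [NormedAddCommGroup V] [InnerProductSpace ℝ V] [FiniteDimensional ℝ V]
    (F : V → ℝ) (hF : IsMinkowskiNorm F)
    (W : V →L[ℝ] V)
    (hWskew : ∀ u v : V, ⟪W u, v⟫ + ⟪u, W v⟫ = 0)
    (hWF : ∀ t : ℝ, ∀ y : V, F ((NormedSpace.exp (t • W)) y) = F y)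
    (A : V → V →ₗ[ℝ] V)
    (hA : ∀ y : V, y ≠ 0 → ∀ u v : V, gtensor F y u v = ⟪A y u, v⟫) :
    ∀ y : V, y ≠ 0 → A y (W y) = W (A y y) := by
  obtain ⟨hFsm, hFpos, hFhom, hFpd⟩ := hF
  intro y hy
  set G : V → ℝ := fun z => (F z) ^ 2 with hGdef
  have hdiff : ∀ x : V, x ≠ 0 → DifferentiableAt ℝ G x := fun x hx =>
    (aux_diffAt hFsm hx).differentiableAt (by simp)
  have hfd : ∀ x : V, x ≠ 0 → DifferentiableAt ℝ (fderiv ℝ G) x := by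
    intro x hx
    have h2 : ContDiffAt ℝ 1 (fderiv ℝ G) x :=
      (aux_diffAt hFsm hx).fderiv_right (WithTop.coe_le_coe.mpr le_top)
    exact h2.differentiableAt one_ne_zero
  set Gd : V → (V →L[ℝ] ℝ) := fderiv ℝ G with hGd
  set Gdd : V →L[ℝ] V →L[ℝ] ℝ := fderiv ℝ (fderiv ℝ G) y with hGdd
  -- Step B : fderiv G x (W x) = 0 for x ≠ 0
  have stepB : ∀ x : V, x ≠ 0 → Gd x (W x) = 0 := by
    intro x hx
    have hexp : HasDerivAt (fun t : ℝ => (NormedSpace.exp (t • W)) x) (W x) 0 := by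
      have h := hasDerivAt_exp_smul_const (𝕂 := ℝ) W (0 : ℝ)
      have h2 := ((ContinuousLinearMap.apply ℝ V x).hasFDerivAt).comp_hasDerivAt
        (x := (0 : ℝ)) h
      simpa [NormedSpace.exp_zero, Function.comp_def] using h2
    have hx0 : (NormedSpace.exp ((0 : ℝ) • W)) x = x := by
      simp [NormedSpace.exp_zero]
    have hd1 : HasDerivAt (fun t : ℝ => G ((NormedSpace.exp (t • W)) x)) (Gd x (W x)) 0 := by
      have hGx : HasFDerivAt G (Gd x) ((NormedSpace.exp ((0 : ℝ) • W)) x) := by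
        rw [hx0]; exact (hdiff x hx).hasFDerivAt
      exact hGx.comp_hasDerivAt (x := (0 : ℝ)) hexp
    have hd2 : HasDerivAt (fun t : ℝ => G ((NormedSpace.exp (t • W)) x)) 0 0 := by
      have : (fun t : ℝ => G ((NormedSpace.exp (t • W)) x)) = fun _ => G x := by
        funext t; simp [hGdef, hWF t x]
      rw [this]; exact hasDerivAt_const _ _
    exact hd1.unique hd2
  -- Step C : Gdd u (W y) + Gd y (W u) = 0
  have stepC : ∀ u : V, Gdd u (W y) + Gd y (W u) = 0 := by
    intro u
    have h1 : HasFDerivAt (fun x => Gd x (W x))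
        ((Gd y).comp W + Gdd.flip (W y)) y :=
      (hfd y hy).hasFDerivAt.clm_apply W.hasFDerivAt
    have h2 : HasFDerivAt (fun x => Gd x (W x)) (0 : V →L[ℝ] ℝ) y := by
      have hzero : (fun x => Gd x (W x)) =ᶠ[nhds y] fun _ => (0 : ℝ) := by
        filter_upwards [isOpen_compl_singleton.mem_nhds hy] with x hx
        exact stepB x hx
      exact (hasFDerivAt_const (0 : ℝ) y).congr_of_eventuallyEq hzero
    have := h1.unique h2
    have happ := congrFun (congrArg (fun L : V →L[ℝ] ℝ => (L : V → ℝ)) this) u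
    simpa [add_comm] using happ
  -- Euler-type: Gd (c • x) = c • Gd x for c > 0, x ≠ 0
  have hhom : ∀ c : ℝ, 0 ≤ c → ∀ x : V, G (c • x) = c ^ 2 * G x := by
    intro c hc x
    simp only [hGdef, hFhom c hc x, mul_pow]
  have scaleGd : ∀ c : ℝ, 0 < c → ∀ x : V, x ≠ 0 → ∀ w : V,
      Gd (c • x) w = c * Gd x w := by
    intro c hc x hx w
    have hcx : c • x ≠ 0 := smul_ne_zero (ne_of_gt hc) hx
    have hA1 : HasFDerivAt (fun z => G (c • z)) ((Gd (c • x)).comp (c • ContinuousLinearMap.id ℝ V)) x := by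
      have hlin : HasFDerivAt (fun z : V => c • z) (c • ContinuousLinearMap.id ℝ V) x :=
        ((c • ContinuousLinearMap.id ℝ V).hasFDerivAt).congr_of_eventuallyEq
          (Filter.Eventually.of_forall fun z => by simp)
      exact ((hdiff _ hcx).hasFDerivAt).comp x hlin
    have hA2 : HasFDerivAt (fun z => G (c • z)) (c ^ 2 • Gd x) x := by
      have heq : (fun z => G (c • z)) = fun z => c ^ 2 * G z := by
        funext z; exact hhom c hc.le z
      rw [heq]
      exact ((hdiff x hx).hasFDerivAt).const_mul (c ^ 2) |>.congr_fderiv (by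
        ext w; simp [mul_comm, hGd])
    have := hA1.unique hA2
    have happ := congrFun (congrArg (fun L : V →L[ℝ] ℝ => (L : V → ℝ)) this) w
    simp only [ContinuousLinearMap.coe_comp', Function.comp_apply,
      ContinuousLinearMap.coe_smul', Pi.smul_apply, ContinuousLinearMap.coe_id', id_eq,
      smul_eq_mul] at happ
    rw [ContinuousLinearMap.map_smul, smul_eq_mul] at happ
    have h' : c * Gd (c • x) w = c * (c * Gd x w) := by rw [happ]; ring
    exact mul_left_cancel₀ (ne_of_gt hc) h'
  -- Step D : Gdd y w = Gd y w
  have stepD : ∀ w : V, Gdd y w = Gd y w := by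
    intro w
    have hcurve : HasDerivAt (fun s : ℝ => (1 + s) • y) y 0 := by
      have : HasDerivAt (fun s : ℝ => (1 + s)) 1 0 := (hasDerivAt_id (0 : ℝ)).const_add 1
      simpa using this.smul_const y
    have h1 : HasDerivAt (fun s : ℝ => Gd ((1 + s) • y) w) (Gdd y w) 0 := by
      have hfd' : HasFDerivAt Gd (fderiv ℝ Gd y) (((1 : ℝ) + 0) • y) := by
        rw [show ((1 : ℝ) + 0) • y = y by norm_num]
        exact (hfd y hy).hasFDerivAt
      have h := hfd'.comp_hasDerivAt (x := (0 : ℝ)) hcurve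
      have happ := ((ContinuousLinearMap.apply ℝ ℝ w).hasFDerivAt).comp_hasDerivAt
        (x := (0 : ℝ)) h
      simpa [hGd, Function.comp_def] using happ
    have h2 : HasDerivAt (fun s : ℝ => Gd ((1 + s) • y) w) (Gd y w) 0 := by
      have heq : (fun s : ℝ => Gd ((1 + s) • y) w) =ᶠ[nhds 0] fun s : ℝ => (1 + s) * Gd y w := by
        have hpos : ∀ᶠ s : ℝ in nhds 0, 0 < 1 + s := by
          filter_upwards [Ioi_mem_nhds (show (-1 : ℝ) < 0 by norm_num)] with s hs
          simp only [Set.mem_Ioi] at hs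
          linarith
        filter_upwards [hpos] with s hs
        exact scaleGd (1 + s) hs y hy w
      have hder : HasDerivAt (fun s : ℝ => (1 + s) * Gd y w) (Gd y w) 0 := by
        have : HasDerivAt (fun s : ℝ => (1 + s)) 1 0 := (hasDerivAt_id (0 : ℝ)).const_add 1
        simpa using this.mul_const (Gd y w)
      exact hder.congr_of_eventuallyEq heq
    exact h1.unique h2
  -- symmetry of second derivative
  have hsymm : ∀ u v : V, Gdd u v = Gdd v u := by
    intro u v
    have hf : ∀ᶠ x in nhds y, HasFDerivAt G (Gd x) x := by
      filter_upwards [isOpen_compl_singleton.mem_nhds hy] with x hx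
      exact (hdiff x hx).hasFDerivAt
    exact second_derivative_symmetric_of_eventually hf (hfd y hy).hasFDerivAt u v
  -- relate gtensor to Gdd
  have hgt : ∀ u v : V, gtensor F y u v = (1 / 2) * Gdd u v := fun u v =>
    gtensor_eq_sndDeriv hFsm hy u v
  -- assemble
  have key : ∀ v : V, ⟪A y (W y), v⟫ = ⟪W (A y y), v⟫ := by
    intro v
    have e1 : ⟪A y (W y), v⟫ = (1 / 2) * Gdd (W y) v := by
      rw [← hA y hy (W y) v, hgt]
    have e2 : ⟪A y y, W v⟫ = (1 / 2) * Gdd y (W v) := by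
      rw [← hA y hy y (W v), hgt]
    have e3 : Gdd (W y) v = Gdd v (W y) := hsymm _ _
    have e4 : Gdd v (W y) = -Gd y (W v) := by
      have := stepC v; linarith
    have e5 : Gdd y (W v) = Gd y (W v) := stepD (W v)
    have e6 : ⟪W (A y y), v⟫ = -⟪A y y, W v⟫ := by
      have := hWskew (A y y) v; linarith
    rw [e1, e3, e4, e6, e2, e5]; ring
  exact ext_inner_right ℝ key
end

section
/- Let 𝔤 be a compact Lie algebra with ad-invariant inner product Q and reductive decomposition 𝔤 = 𝔥 ⊕ 𝔪 ([𝔥,𝔪] ⊆ 𝔪, Q-orthogonal). Let F be an Ad(H)-invariant Minkowski norm on 𝔪 with metric operator A_y. Then for nonzero u ∈ 𝔪, the condition 'g_u([u+u', m]_𝔪, u) = 0 for all m ∈ 𝔪' (where [·]_𝔪 denotes the 𝔪-projection) is equivalent to '[u+u', A_u(u)] = 0', for any fixed u' ∈ 𝔥. -/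
open RealInnerProductSpace

/-! ### Auxiliary lemmas on the exponential of an operator -/

theorem exp_apply_eq_tsum {E : Type*} [NormedAddCommGroup E] [NormedSpace ℝ E] [CompleteSpace E]
    (A : E →L[ℝ] E) (x : E) :
    NormedSpace.exp A x = ∑' n : ℕ, ((n.factorial : ℝ)⁻¹) • (A ^ n) x := by
  rw [NormedSpace.exp_eq_tsum ℝ]
  have := (ContinuousLinearMap.apply ℝ E x).map_tsum
    (NormedSpace.expSeries_summable' (𝕂 := ℝ) A)
  simpa using this

theorem exp_apply_summable {E : Type*} [NormedAddCommGroup E] [NormedSpace ℝ E] [CompleteSpace E]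
    (A : E →L[ℝ] E) (x : E) :
    Summable fun n : ℕ => ((n.factorial : ℝ)⁻¹) • (A ^ n) x := by
  refine ((NormedSpace.expSeries_summable' (𝕂 := ℝ) A).map
    (ContinuousLinearMap.apply ℝ E x) (ContinuousLinearMap.apply ℝ E x).continuous).congr ?_
  intro n; simp

/-- The exponential commutes with an intertwining continuous linear map. -/
theorem exp_comm_aux {V W : Type*} [NormedAddCommGroup V] [NormedSpace ℝ V] [CompleteSpace V]
    [NormedAddCommGroup W] [NormedSpace ℝ W] [CompleteSpace W]
    (ι : V →L[ℝ] W) (T : V →L[ℝ] V) (S : W →L[ℝ] W)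
    (h : ∀ v, S (ι v) = ι (T v)) (v : V) :
    NormedSpace.exp S (ι v) = ι (NormedSpace.exp T v) := by
  have hpow : ∀ (n : ℕ) (v : V), (S ^ n) (ι v) = ι ((T ^ n) v) := by
    intro n
    induction n with
    | zero => intro v; simp
    | succ k ih =>
      intro v
      rw [pow_succ, pow_succ]
      simp only [ContinuousLinearMap.mul_apply]
      rw [h, ih]
  rw [exp_apply_eq_tsum, exp_apply_eq_tsum, ι.map_tsum (exp_apply_summable T v)]
  exact tsum_congr fun n => by rw [hpow, map_smul]

/-! ### Calculus lemmas on the fundamental tensor -/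

section Calc

variable {V : Type*} [NormedAddCommGroup V] [InnerProductSpace ℝ V] {F : V → ℝ}

theorem mink_hasfderiv (hF : IsMinkowskiNorm F) {y : V} (hy : y ≠ 0) :
    HasFDerivAt (fun x => F x ^ 2) (fderiv ℝ (fun x => F x ^ 2) y) y := by
  have h1 : ContDiffAt ℝ (⊤ : ℕ∞) (fun x => F x ^ 2) y :=
    (hF.1.pow 2).contDiffAt (isOpen_compl_singleton.mem_nhds hy)
  exact (h1.differentiableAt (by simp)).hasFDerivAt

theorem mink_fderiv_diff (hF : IsMinkowskiNorm F) {y : V} (hy : y ≠ 0) :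
    DifferentiableAt ℝ (fderiv ℝ (fun x => F x ^ 2)) y := by
  have h1 : ContDiffOn ℝ (⊤ : ℕ∞) (fderiv ℝ (fun x => F x ^ 2)) {(0 : V)}ᶜ :=
    (hF.1.pow 2).fderiv_of_isOpen isOpen_compl_singleton (by simp)
  exact ((h1.contDiffAt (isOpen_compl_singleton.mem_nhds hy)).differentiableAt (by simp))

theorem line_hasDerivAt {y : V} (u : V) : HasDerivAt (fun s : ℝ => y + s • u) u 0 := by
  simpa using ((hasDerivAt_id (0:ℝ)).smul_const u).const_add y

theorem mink_line_deriv (hF : IsMinkowskiNorm F) {y : V} (hy : y ≠ 0) (u v : V) :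
    gtensor F y u v
      = (1 / 2) * deriv (fun s : ℝ => (fderiv ℝ (fun x => F x ^ 2) (y + s • u)) v) 0 := by
  rw [gtensor]
  congr 1
  apply Filter.EventuallyEq.deriv_eq
  have hev : ∀ᶠ s : ℝ in nhds 0, y + s • u ≠ 0 := by
    have hc : ContinuousAt (fun s : ℝ => y + s • u) 0 := by fun_prop
    have := hc.eventually_ne (y := (0:V)) (by simpa using hy)
    simpa using this
  filter_upwards [hev] with s hs
  have hcurve : HasDerivAt (fun t : ℝ => y + s • u + t • v) v 0 := line_hasDerivAt v
  have hfd : HasFDerivAt (fun x => F x ^ 2)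
      (fderiv ℝ (fun x => F x ^ 2) (y + s • u)) ((fun t : ℝ => y + s • u + t • v) 0) := by
    simpa using mink_hasfderiv hF hs
  exact (hfd.comp_hasDerivAt 0 hcurve).deriv

theorem gtensor_eq_fderiv2 (hF : IsMinkowskiNorm F) {y : V} (hy : y ≠ 0) (u v : V) :
    gtensor F y u v
      = (1 / 2) * ((fderiv ℝ (fderiv ℝ (fun x => F x ^ 2)) y) u) v := by
  rw [mink_line_deriv hF hy u v]
  congr 1
  have h1 : HasDerivAt (fun s : ℝ => y + s • u) u 0 := line_hasDerivAt u
  have hfd : HasFDerivAt (fderiv ℝ (fun x => F x ^ 2))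
      (fderiv ℝ (fderiv ℝ (fun x => F x ^ 2)) y) ((fun s : ℝ => y + s • u) 0) := by
    simpa using (mink_fderiv_diff hF hy).hasFDerivAt
  have h2 := hfd.comp_hasDerivAt 0 h1
  have h3 := h2.clm_apply (hasDerivAt_const (0:ℝ) v)
  simpa using h3.deriv

theorem gtensor_symm (hF : IsMinkowskiNorm F) {y : V} (hy : y ≠ 0) (u v : V) :
    gtensor F y u v = gtensor F y v u := by
  rw [gtensor_eq_fderiv2 hF hy, gtensor_eq_fderiv2 hF hy]
  congr 1
  have hfev : ∀ᶠ x in nhds y, HasFDerivAt (fun x => F x ^ 2)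
      (fderiv ℝ (fun x => F x ^ 2) x) x := by
    filter_upwards [isOpen_compl_singleton.mem_nhds hy] with x hx
    exact mink_hasfderiv hF hx
  exact second_derivative_symmetric_of_eventually hfev (mink_fderiv_diff hF hy).hasFDerivAt u v

theorem mink_fderiv_smul (hF : IsMinkowskiNorm F) {y : V} (hy : y ≠ 0) {c : ℝ} (hc : 0 < c) :
    fderiv ℝ (fun x => F x ^ 2) (c • y) = c • fderiv ℝ (fun x => F x ^ 2) y := by
  have hcy : c • y ≠ 0 := smul_ne_zero hc.ne' hy
  have hsm : HasFDerivAt (fun x : V => c • x) (c • ContinuousLinearMap.id ℝ V) y :=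
    (hasFDerivAt_id y).const_smul c
  have h1 : HasFDerivAt (fun x : V => F (c • x) ^ 2)
      ((fderiv ℝ (fun x => F x ^ 2) (c • y)).comp (c • ContinuousLinearMap.id ℝ V)) y :=
    (mink_hasfderiv hF hcy).comp y hsm
  have heq : (fun x : V => F (c • x) ^ 2) = fun x : V => c ^ 2 • (F x ^ 2) := by
    funext x
    rw [hF.2.2.1 c hc.le x, smul_eq_mul]
    ring
  rw [heq] at h1
  have h2 : HasFDerivAt (fun x : V => c ^ 2 • (F x ^ 2))
      ((c ^ 2 : ℝ) • fderiv ℝ (fun x => F x ^ 2) y) y :=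
    (mink_hasfderiv hF hy).const_smul (c ^ 2)
  have h3 := h1.unique h2
  ext w
  have h4 := congrArg (fun (L : V →L[ℝ] ℝ) => L w) h3
  simp only [ContinuousLinearMap.comp_apply, ContinuousLinearMap.smul_apply,
    ContinuousLinearMap.id_apply, smul_eq_mul, map_smul] at h4 ⊢
  have := mul_left_cancel₀ hc.ne' (by linarith [h4] : c * (fderiv ℝ (fun x => F x ^ 2) (c • y)) w
      = c * (c * (fderiv ℝ (fun x => F x ^ 2) y) w))
  linarith [this]

theorem gtensor_self (hF : IsMinkowskiNorm F) {y : V} (hy : y ≠ 0) (w : V) :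
    gtensor F y y w = (1 / 2) * (fderiv ℝ (fun x => F x ^ 2) y) w := by
  rw [mink_line_deriv hF hy y w]
  congr 1
  have hev : (fun s : ℝ => (fderiv ℝ (fun x => F x ^ 2) (y + s • y)) w)
      =ᶠ[nhds 0] fun s : ℝ => (1 + s) * (fderiv ℝ (fun x => F x ^ 2) y) w := by
    filter_upwards [eventually_gt_nhds (by norm_num : (-1:ℝ) < 0)] with s hs
    have h1 : y + s • y = (1 + s) • y := by rw [add_smul, one_smul]
    rw [h1, mink_fderiv_smul hF hy (by linarith : (0:ℝ) < 1 + s)]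
    simp [smul_eq_mul]
  rw [hev.deriv_eq]
  have : HasDerivAt (fun s : ℝ => (1 + s) * (fderiv ℝ (fun x => F x ^ 2) y) w)
      ((fderiv ℝ (fun x => F x ^ 2) y) w) 0 := by
    simpa using ((hasDerivAt_id (0:ℝ)).const_add 1).mul_const
      ((fderiv ℝ (fun x => F x ^ 2) y) w)
  exact this.deriv


/-- If `F` is invariant under the one-parameter group generated by `Tc` (expressed through an
intertwining map `ι` into an ambient space `W`), then the derivative of `F²` at `u` in the
direction `Tc u` vanishes. -/
theorem mink_invariance_fderiv_zero {V W : Type*} [NormedAddCommGroup V] [InnerProductSpace ℝ V]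
    [CompleteSpace V] [NormedAddCommGroup W] [NormedSpace ℝ W] [CompleteSpace W]
    {F : V → ℝ} (hF : IsMinkowskiNorm F) {u : V} (hu : u ≠ 0)
    (ι : V →L[ℝ] W) (Tc : V →L[ℝ] V) (S : W →L[ℝ] W)
    (hcomm : ∀ v, S (ι v) = ι (Tc v))
    (hinv : ∀ t : ℝ, ∀ x x' : V, ι x' = NormedSpace.exp (t • S) (ι x) → F x' = F x) :
    fderiv ℝ (fun x : V => F x ^ 2) u (Tc u) = 0 := by
  have hcommt : ∀ t : ℝ, ∀ v, (t • S) (ι v) = ι ((t • Tc) v) := by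
    intro t v
    simp only [ContinuousLinearMap.smul_apply, hcomm, map_smul]
  have hFc : ∀ t : ℝ, F (NormedSpace.exp (t • Tc) u) = F u := by
    intro t
    exact hinv t u _ (exp_comm_aux ι (t • Tc) (t • S) (hcommt t) u).symm
  have hcd : HasDerivAt (fun t : ℝ => NormedSpace.exp (t • Tc) u) (Tc u) 0 := by
    have h1 := hasDerivAt_exp_smul_const (𝕂 := ℝ) Tc 0
    have h2 := h1.clm_apply (hasDerivAt_const (0:ℝ) u)
    simpa [NormedSpace.exp_zero] using h2
  have hc0 : (fun t : ℝ => NormedSpace.exp (t • Tc) u) 0 = u := by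
    simp [NormedSpace.exp_zero]
  have hchain : HasDerivAt (fun t : ℝ => F (NormedSpace.exp (t • Tc) u) ^ 2)
      (fderiv ℝ (fun x : V => F x ^ 2) u (Tc u)) 0 := by
    have hfd : HasFDerivAt (fun x : V => F x ^ 2) (fderiv ℝ (fun x : V => F x ^ 2) u)
        ((fun t : ℝ => NormedSpace.exp (t • Tc) u) 0) := by
      rw [hc0]; exact mink_hasfderiv hF hu
    exact hfd.comp_hasDerivAt 0 hcd
  have hconst : (fun t : ℝ => F (NormedSpace.exp (t • Tc) u) ^ 2)
      = fun _ : ℝ => F u ^ 2 := funext fun t => by rw [hFc t]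
  rw [hconst] at hchain
  exact hchain.unique (hasDerivAt_const 0 _)

end Calc

set_option maxHeartbeats 2000000 in
set_option synthInstance.maxHeartbeats 1000000 in
/-- for an `Ad(H)`-invariant Minkowski norm `F` on `𝔪 = 𝔥ᗮ` (with
`Q = ⟪·,·⟫` ad-invariant and `[𝔥,𝔪] ⊆ 𝔪`), the geodesic-orbit condition
`g_u([u+u', m]_𝔪, u) = 0` for all `m ∈ 𝔪` is equivalent to `[u+u', A_u(u)] = 0`,
for any fixed `u' ∈ 𝔥` and nonzero `u ∈ 𝔪`. The Lie bracket is encoded as a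
bilinear map `br` (alternating and satisfying the Leibniz/Jacobi identity), so that
`⁅x, y⁆ = br x y` and `ad(w) = br w`. -/
theorem go_condition_iff_bracket_vanishes
    {G : Type*} [NormedAddCommGroup G] [InnerProductSpace ℝ G] [FiniteDimensional ℝ G]
    (br : G →ₗ[ℝ] G →ₗ[ℝ] G)
    (hbr_alt : ∀ x : G, br x x = 0)
    (hbr_jacobi : ∀ x y z : G, br x (br y z) = br (br x y) z + br y (br x z))
    (hQinv : ∀ z x y : G, ⟪br z x, y⟫ + ⟪x, br z y⟫ = 0)
    (H : Submodule ℝ G)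
    (hHsub : ∀ x ∈ H, ∀ y ∈ H, br x y ∈ H)
    (M : Submodule ℝ G) (hM : M = Hᗮ)
    (hHM : ∀ h ∈ H, ∀ x ∈ M, br h x ∈ M)
    (F : M → ℝ) (hF : IsMinkowskiNorm F)
    (hFinv : ∀ w ∈ H, ∀ t : ℝ, ∀ x x' : M,
      (x' : G) = NormedSpace.exp
        (t • (LinearMap.toContinuousLinearMap (br w))) (x : G) →
      F x' = F x)
    (A : M → M →ₗ[ℝ] M)
    (hA : ∀ y : M, y ≠ 0 → ∀ v w : M, gtensor F y v w = ⟪A y v, w⟫)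
    (u : M) (hu : u ≠ 0) (u' : G) (hu' : u' ∈ H) :
    (∀ mm : M, gtensor F u (M.orthogonalProjectionOnto (br ((u : G) + u') (mm : G))) u = 0) ↔
      br ((u : G) + u') ((A u u : M) : G) = 0 := by
  classical
  set B : M := A u u with hB
  -- alternating bracket
  have halt : ∀ a b : G, br a b = - br b a := by
    intro a b
    have h0 := hbr_alt (a + b)
    simp only [map_add, LinearMap.add_apply, hbr_alt, zero_add, add_zero] at h0
    exact eq_neg_of_add_eq_zero_right h0
  -- Lemma D : invariance gives ⟪B, [h, u]⟫ = 0 for h ∈ H.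
  have lemD : ∀ h' ∈ H, (⟪(B : G), br h' (u : G)⟫ : ℝ) = 0 := by
    intro h hh
    set T : M →ₗ[ℝ] M := (br h).restrict (fun x hx => hHM h hh x hx) with hT
    set Tc : M →L[ℝ] M := LinearMap.toContinuousLinearMap T with hTc
    have hcoe : ∀ v : M, ((Tc v : M) : G) = br h (v : G) := by
      intro v; simp [hTc, hT, LinearMap.restrict_apply, LinearMap.coe_toContinuousLinearMap']
    have hcomm : ∀ v : M, (LinearMap.toContinuousLinearMap (br h)) (M.subtypeL v)
        = M.subtypeL (Tc v) := by
      intro v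
      simp only [Submodule.coe_subtypeL', Submodule.coe_subtype]
      rw [hcoe]
      simp [LinearMap.coe_toContinuousLinearMap']
    have hzero : fderiv ℝ (fun x : M => F x ^ 2) u (Tc u) = 0 := by
      refine mink_invariance_fderiv_zero hF hu M.subtypeL Tc
        (LinearMap.toContinuousLinearMap (br h)) hcomm ?_
      intro t x x' hx
      exact hFinv h hh t x x' (by simpa using hx)
    have hgt : gtensor F u u (Tc u) = 0 := by
      rw [gtensor_self hF hu (Tc u), hzero, mul_zero]
    have hinner : (⟪B, Tc u⟫ : ℝ) = 0 := by rw [← hA u hu u (Tc u), hgt]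
    have : (⟪B, Tc u⟫ : ℝ) = ⟪(B : G), br h (u : G)⟫ := by
      rw [Submodule.coe_inner, hcoe]
    rw [← this]; exact hinner
  -- key : g_u(v, u) = ⟪B, v⟫
  have gkey : ∀ v : M, gtensor F u v u = ⟪(B : G), (v : G)⟫ := by
    intro v
    rw [gtensor_symm hF hu v u, hA u hu u v, Submodule.coe_inner]
  -- projection key
  have projkey : ∀ x : G,
      (⟪(B : G), ((M.orthogonalProjectionOnto x : M) : G)⟫ : ℝ) = ⟪(B : G), x⟫ := by
    intro x
    have hmem : x - (M.orthogonalProjectionOnto x : M) ∈ Mᗮ :=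
      M.sub_starProjection_mem_orthogonal x
    have h0 : (⟪(B : G), x - (M.orthogonalProjectionOnto x : M)⟫ : ℝ) = 0 := by
      have := (Submodule.mem_orthogonal M _).1 hmem (B : G) B.2
      exact this
    rw [inner_sub_right] at h0
    linarith
  -- transformation of the GO condition
  have transform : ∀ mm : M,
      gtensor F u (M.orthogonalProjectionOnto (br ((u : G) + u') (mm : G))) u
        = ⟪(B : G), br ((u : G) + u') (mm : G)⟫ := by
    intro mm
    rw [gkey, projkey]
  constructor
  · -- forward
    intro hgo
    set w : G := br ((u : G) + u') (B : G) with hw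
    -- w ∈ Mᗮ
    have hwMp : w ∈ Mᗮ := by
      rw [Submodule.mem_orthogonal]
      intro x hx
      have h1 := hQinv ((u : G) + u') (B : G) x
      have h2 : gtensor F u (M.orthogonalProjectionOnto (br ((u : G) + u') x)) u = 0 := hgo ⟨x, hx⟩
      have h3 : (⟪(B : G), br ((u : G) + u') x⟫ : ℝ) = 0 := by
        rw [← h2, transform ⟨x, hx⟩]
      rw [real_inner_comm]
      linarith
    -- w ∈ M
    have hwM : w ∈ M := by
      have hsplit : w = br (u : G) (B : G) + br u' (B : G) := by
        rw [hw, map_add, LinearMap.add_apply]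
      have h2 : br u' (B : G) ∈ M := hHM u' hu' (B : G) B.2
      have h1 : br (u : G) (B : G) ∈ M := by
        have h1' : br (u : G) (B : G) ∈ Hᗮ := by
          rw [Submodule.mem_orthogonal]
          intro x hx
          have hq := hQinv (u : G) (B : G) x
          have h4 : br (u : G) x = - br x (u : G) := halt (u : G) x
          have h5 : (⟪(B : G), br (u : G) x⟫ : ℝ) = - ⟪(B : G), br x (u : G)⟫ := by
            rw [h4, inner_neg_right]
          have h6 := lemD x hx
          rw [real_inner_comm]
          linarith
        rwa [← hM] at h1'
      rw [hsplit]
      exact M.add_mem h1 h2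
    have : (⟪w, w⟫ : ℝ) = 0 := (Submodule.mem_orthogonal M w).1 hwMp w hwM
    exact inner_self_eq_zero.1 this
  · -- backward
    intro hz mm
    rw [transform mm]
    have h1 := hQinv ((u : G) + u') (B : G) (mm : G)
    rw [hz] at h1
    simpa using h1
end
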